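/- arXiv:2110.13314 — 6 statements merged into one kernel-verified Lean document; each statement's English description precedes it below -/
import Mathlib

section
/- For a permutation w in S_n and indices 1 ≤ i < j ≤ n, the transposition T_{i,j} is below w in Bruhat order if and only if max{w(1),...,w(i)} ≥ j and max{w⁻¹(1),...,w⁻¹(i)} ≥ j. -/
open Equiv

/-- Number of inversions (Coxeter length) of a permutation of ℕ. -/
noncomputable def invNum (w : Perm ℕ) : ℕ :=
  Set.ncard {p : ℕ × ℕ | p.1 < p.2 ∧ w p.2 < w p.1}

/-- Strong Bruhat order on (finitary) permutations of ℕ. -/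
def BruhatLE (x y : Perm ℕ) : Prop :=
  Relation.ReflTransGen
    (fun u v => (∃ a b : ℕ, a < b ∧ v = u * Equiv.swap a b) ∧ invNum u < invNum v) x y

def BruhatLT (x y : Perm ℕ) : Prop := BruhatLE x y ∧ x ≠ y

/-- w avoids the pattern 3412. -/
def Avoids3412 (w : Perm ℕ) : Prop :=
  ¬ ∃ a b c d : ℕ, a < b ∧ b < c ∧ c < d ∧ w c < w d ∧ w d < w a ∧ w a < w b

/-- w avoids the pattern 4231. -/
def Avoids4231 (w : Perm ℕ) : Prop :=
  ¬ ∃ a b c d : ℕ, a < b ∧ b < c ∧ c < d ∧ w d < w b ∧ w b < w c ∧ w c < w a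

/-!
Call `w` crossing for `i < j` if some position `≤ i` carries a value `≥ j` and some position
`≥ j` carries a value `≤ i`.

Upward: a Bruhat step `u ⋖ u * (a b)` with `u a < u b` only moves a larger value to the earlier
position `a` and a smaller one to the later position `b`, so being crossing passes from `(i j)` to
everything above it. Downward: a crossing `w ≠ (i j)` always has an inversion `(c, d)` such that
`w * (c d)` is still crossing; untangling an inversion strictly lowers the number of inversions, so
induction on that number walks `w` down to `(i j)`.
-/

namespace Equiv.Perm

variable {α : Type*} [LinearOrder α]

def inversions (w : Perm α) : Set (α × α) := {p | p.1 < p.2 ∧ w p.2 < w p.1}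

theorem eq_left_or_eq_right_of_swap_apply_lt_swap_apply {a b p q : α} (hab : a < b)
    (hpq : p < q) (h : swap a b q < swap a b p) : (p = a ∧ q ≤ b) ∨ (a ≤ p ∧ q = b) := by
  grind

theorem inversions_mul_swap_subset [LocallyFiniteOrder α] (u : Perm α) {a b : α} (hab : a < b) :
    inversions (u * swap a b) ⊆
      Prod.map (swap a b) (swap a b) '' inversions u ∪ Set.Icc a b ×ˢ Set.Icc a b := by
  rintro ⟨p, q⟩ ⟨hpq, hinv⟩
  rcases lt_or_gt_of_ne ((swap a b).injective.ne hpq.ne) with hlt | hgt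
  · exact Or.inl ⟨(swap a b p, swap a b q), ⟨hlt, hinv⟩, by simp⟩
  · have := eq_left_or_eq_right_of_swap_apply_lt_swap_apply hab hpq hgt
    right
    simp only [Set.mem_prod, Set.mem_Icc]
    grind

theorem finite_inversions_mul_swap [LocallyFiniteOrder α] {u : Perm α}
    (hu : (inversions u).Finite) {a b : α} (hab : a < b) :
    (inversions (u * swap a b)).Finite :=
  ((hu.image _).union ((Set.finite_Icc a b).prod (Set.finite_Icc a b))).subset
    (inversions_mul_swap_subset u hab)

theorem ncard_inversions_lt_ncard_inversions_mul_swap [LocallyFiniteOrder α] {u : Perm α}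
    (hu : (inversions u).Finite) {a b : α} (hab : a < b) (hlt : u a < u b) :
    (inversions u).ncard < (inversions (u * swap a b)).ncard := by
  set t := swap a b
  have hab_notMem : (a, b) ∉ inversions u := fun h => h.2.not_gt hlt
  -- Pairs whose order `t` preserves are carried along by `t`; the pairs it reverses are `(a, b)`,
  -- which becomes an inversion, and `(a, c)`, `(c, b)` with `a < c < b`, which stay inversions.
  let g : α × α → α × α := fun p => if t p.1 < t p.2 then (t p.1, t p.2) else p
  have hmaps : ∀ p ∈ insert (a, b) (inversions u), g p ∈ inversions (u * t) := by
    rintro ⟨p, q⟩ (hp | ⟨hpq, hinv⟩)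
    · obtain ⟨rfl, rfl⟩ := Prod.mk.inj hp
      simp [g, inversions, t, hab, hlt, hab.not_gt]
    · simp only [g]
      split_ifs with h
      · exact ⟨h, by simpa [t] using hinv⟩
      · have := eq_left_or_eq_right_of_swap_apply_lt_swap_apply hab hpq
          (lt_of_le_of_ne (not_lt.mp h) (t.injective.ne hpq.ne'))
        refine ⟨hpq, ?_⟩
        simp only [Perm.mul_apply]
        grind
  have hinj : Set.InjOn g (insert (a, b) (inversions u)) := by
    have hordered : ∀ p ∈ insert (a, b) (inversions u), p.1 < p.2 := by
      rintro p (rfl | hp)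
      exacts [hab, hp.1]
    rintro ⟨p, q⟩ hp ⟨r, s⟩ hr hgeq
    have := hordered _ hp
    have := hordered _ hr
    simp only [g] at hgeq
    split_ifs at hgeq <;> grind
  have := Set.ncard_le_ncard_of_injOn g hmaps hinj (finite_inversions_mul_swap hu hab)
  rwa [Set.ncard_insert_of_notMem hab_notMem hu, Nat.add_one_le_iff] at this

theorem finite_inversions_of_forall_le_apply_eq [LocallyFiniteOrderBot α] {w : Perm α} {n : α}
    (hw : ∀ k, n ≤ k → w k = k) : (inversions w).Finite := by
  refine ((Set.finite_Iio n).prod (Set.finite_Iio n)).subset ?_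
  rintro ⟨p, q⟩ ⟨hpq, hinv⟩
  have hlt : ∀ k < n, w k < n := fun k hk => by
    by_contra! h
    exact hk.not_ge (w.injective (hw _ h) ▸ h)
  have hq : q < n := by
    by_contra! hq
    rw [hw q hq] at hinv
    rcases lt_or_ge p n with hp | hp
    · exact (hlt p hp).not_ge (hq.trans hinv.le)
    · exact (hw p hp ▸ hinv).not_gt hpq
  exact ⟨hpq.trans hq, hq⟩

theorem exists_inversion_of_ne_one [WellFoundedLT α] {z : Perm α} (hz : z ≠ 1) :
    ∃ c d, c < d ∧ z d < z c ∧ z c ≠ c ∧ z d ≠ d := by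
  have hex : {x | z x ≠ x}.Nonempty := by
    by_contra! h
    exact hz (Perm.ext fun x => by simpa using Set.eq_empty_iff_forall_notMem.mp h x)
  obtain ⟨c, hc, hmin⟩ := wellFounded_lt.has_min _ hex
  replace hmin : ∀ x < c, z x = x := fun x hx => not_not.mp fun h => hmin x h hx
  obtain ⟨d, hd⟩ : ∃ d, z d = c := ⟨z⁻¹ c, by simp⟩
  have hcd : c < d := by
    rcases lt_trichotomy c d with h | rfl | h
    exacts [h, absurd hd hc, absurd ((hmin d h).symm.trans hd) h.ne]
  have hc_lt : c < z c := by
    by_contra! h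
    exact hc (z.injective (hmin _ (lt_of_le_of_ne h hc)))
  exact ⟨c, d, hcd, hd ▸ hc_lt, hc, by rw [hd]; exact hcd.ne⟩

end Equiv.Perm

theorem Function.Injective.exists_mem_apply_notMem_of_card_lt {α β : Type*} [DecidableEq β]
    {f : α → β} (hf : Function.Injective f) {s : Finset α} {t : Finset β}
    (h : t.card < s.card) : ∃ x ∈ s, f x ∉ t := by
  by_contra! hst
  obtain ⟨x, -, y, -, hxy, hfxy⟩ := Finset.exists_ne_map_eq_of_card_lt_of_maps_to h hst
  exact hxy (hf hfxy)

open Equiv.Perm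

theorem invNum_eq_ncard_inversions (w : Perm ℕ) : invNum w = (inversions w).ncard := rfl

theorem apply_lt_apply_of_invNum_lt_invNum_mul_swap {u : Perm ℕ} {a b : ℕ} (hab : a < b)
    (h : invNum u < invNum (u * swap a b)) : u a < u b := by
  simp only [invNum_eq_ncard_inversions] at h
  have hv : (inversions (u * swap a b)).Finite := Set.finite_of_ncard_pos (by omega)
  by_contra! hba
  have := ncard_inversions_lt_ncard_inversions_mul_swap hv hab (by
    simpa using lt_of_le_of_ne hba (u.injective.ne hab.ne'))
  rw [mul_assoc, swap_mul_self, mul_one] at this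
  omega

/-- `μ_w(i) ≥ j ∧ μ_{w⁻¹}(i) ≥ j`, the second condition read off `w` rather than `w⁻¹`. -/
def Crosses (i j : ℕ) (w : Perm ℕ) : Prop :=
  (∃ k ≤ i, j ≤ w k) ∧ ∃ m, j ≤ m ∧ w m ≤ i

theorem exists_le_inv_apply_iff (w : Perm ℕ) (i j : ℕ) :
    (∃ k ≤ i, j ≤ w⁻¹ k) ↔ ∃ m, j ≤ m ∧ w m ≤ i :=
  ⟨fun ⟨k, hki, hjk⟩ => ⟨w⁻¹ k, hjk, by simpa using hki⟩,
    fun ⟨m, hjm, hmi⟩ => ⟨w m, hmi, by simpa using hjm⟩⟩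

theorem crosses_swap (i j : ℕ) : Crosses i j (swap i j) :=
  ⟨⟨i, le_rfl, by simp⟩, ⟨j, le_rfl, by simp⟩⟩

theorem Crosses.mul_swap {i j a b : ℕ} {u : Perm ℕ} (h : Crosses i j u) (hab : a < b)
    (hlt : u a < u b) : Crosses i j (u * swap a b) := by
  obtain ⟨⟨k, hki, hjk⟩, ⟨m, hjm, hmi⟩⟩ := h
  constructor
  · by_cases hk : k = b
    · exact ⟨a, by omega, by simp [hk] at hjk ⊢; omega⟩
    · exact ⟨k, hki, by grind [Perm.mul_apply]⟩
  · by_cases hm : m = a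
    · exact ⟨b, by omega, by simp [hm] at hmi ⊢; omega⟩
    · exact ⟨m, hjm, by grind [Perm.mul_apply]⟩

theorem Crosses.of_bruhatLE {i j : ℕ} {w : Perm ℕ} (h : BruhatLE (swap i j) w) :
    Crosses i j w := by
  induction h with
  | refl => exact crosses_swap i j
  | tail _ hstep ih =>
    obtain ⟨⟨a, b, hab, rfl⟩, hlt⟩ := hstep
    exact ih.mul_swap hab (apply_lt_apply_of_invNum_lt_invNum_mul_swap hab hlt)

theorem exists_crosses_mul_swap_of_apply_eq_swap {i j : ℕ} {w : Perm ℕ} (hi : w i = j)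
    (hj : w j = i) (hne : w ≠ swap i j) :
    ∃ c d, c < d ∧ w d < w c ∧ Crosses i j (w * swap c d) := by
  obtain ⟨c, d, hcd, hinv, hc, hd⟩ := exists_inversion_of_ne_one (z := w * swap i j)
    (fun h => hne (by rw [← one_mul (swap i j), ← h, mul_assoc, swap_mul_self, mul_one]))
  clear hne
  refine ⟨c, d, hcd, ?_, ⟨i, le_rfl, ?_⟩, ⟨j, le_rfl, ?_⟩⟩ <;>
    simp only [Perm.mul_apply, swap_apply_def] at * <;> split_ifs at * <;> grind

theorem exists_crosses_mul_swap_of_le_of_le {i j a b : ℕ} {w : Perm ℕ} (hij : i < j)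
    (ha : w a = j) (hai : a ≤ i) (hb : w b = i) (hjb : j ≤ b) (hne : w ≠ swap i j) :
    ∃ c d, c < d ∧ w d < w c ∧ Crosses i j (w * swap c d) := by
  by_cases hswap : w i = j ∧ w j = i
  · exact exists_crosses_mul_swap_of_apply_eq_swap hswap.1 hswap.2 hne
  clear hne
  have hinj : ∀ {x y}, w x = w y → x = y := fun h => w.injective h
  rcases hai.lt_or_eq with hai | rfl
  · rcases lt_or_ge (w i) j with hwi | hwi
    · refine ⟨a, i, hai, by grind, ⟨i, le_rfl, ?_⟩, ⟨b, hjb, ?_⟩⟩ <;>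
        simp only [Perm.mul_apply, swap_apply_def] <;> split_ifs <;> grind
    -- among the `j` positions holding values `< j`, one lies after `a` and differs from `b`
    obtain ⟨v, hv, hd⟩ := (w⁻¹).injective.exists_mem_apply_notMem_of_card_lt
      (s := Finset.range j) (t := insert b (Finset.range a))
      ((Finset.card_insert_le _ _).trans_lt (by simp; omega))
    obtain ⟨d, rfl⟩ : ∃ d, w d = v := ⟨w⁻¹ v, by simp⟩
    simp only [Finset.mem_range, Finset.mem_insert, Perm.coe_inv, symm_apply_apply, not_or,
      not_lt] at hv hd
    have had : a ≠ d := by grind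
    refine ⟨a, d, by omega, by omega, ⟨i, le_rfl, ?_⟩, ⟨b, hjb, ?_⟩⟩ <;>
      simp only [Perm.mul_apply, swap_apply_def] <;> split_ifs <;> grind
  rcases hjb.lt_or_eq with hjb | rfl
  · rcases lt_or_ge a (w j) with hwj | hwj
    · refine ⟨j, b, hjb, by grind, ⟨a, le_rfl, ?_⟩, ⟨j, le_rfl, ?_⟩⟩ <;>
        simp only [Perm.mul_apply, swap_apply_def] <;> split_ifs <;> grind
    -- fewer than `j - 1` values lie below `w j`, so some position `< j` other than `a` exceeds it
    obtain ⟨c, hc, hcw⟩ := w.injective.exists_mem_apply_notMem_of_card_lt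
      (s := (Finset.range j).erase a) (t := Finset.range (w j))
      (by rw [Finset.card_erase_of_mem (by simp; omega)]; simp; grind)
    simp only [Finset.mem_erase, Finset.mem_range, not_lt] at hc hcw
    refine ⟨c, j, hc.2, by grind, ⟨a, le_rfl, ?_⟩, ⟨b, hjb.le, ?_⟩⟩ <;>
      simp only [Perm.mul_apply, swap_apply_def] <;> split_ifs <;> grind
  · exact absurd ⟨ha, hb⟩ hswap

theorem Crosses.exists_mul_swap {i j : ℕ} {w : Perm ℕ} (hij : i < j) (h : Crosses i j w)
    (hne : w ≠ swap i j) : ∃ c d, c < d ∧ w d < w c ∧ Crosses i j (w * swap c d) := by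
  obtain ⟨⟨k, hki, hjk⟩, ⟨m, hjm, hmi⟩⟩ := h
  obtain ⟨a, ha⟩ : ∃ a, w a = j := ⟨w⁻¹ j, by simp⟩
  obtain ⟨b, hb⟩ : ∃ b, w b = i := ⟨w⁻¹ i, by simp⟩
  have hinj : ∀ {x y}, w x = w y → x = y := fun h => w.injective h
  rcases lt_or_ge i a with hia | hai
  · refine ⟨k, a, by omega, by grind, ⟨k, hki, ?_⟩, ⟨m, hjm, ?_⟩⟩ <;>
      simp only [Perm.mul_apply, swap_apply_def] <;> split_ifs <;> grind
  rcases lt_or_ge b j with hbj | hjb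
  · refine ⟨b, m, by omega, by grind, ⟨k, hki, ?_⟩, ⟨m, hjm, ?_⟩⟩ <;>
      simp only [Perm.mul_apply, swap_apply_def] <;> split_ifs <;> grind
  exact exists_crosses_mul_swap_of_le_of_le hij ha hai hb hjb hne

theorem bruhatLE_swap_of_crosses {i j : ℕ} (hij : i < j) {w : Perm ℕ}
    (hw : (inversions w).Finite) (h : Crosses i j w) : BruhatLE (swap i j) w := by
  by_cases hne : w = swap i j
  · exact hne ▸ .refl
  obtain ⟨c, d, hcd, hinv, h'⟩ := h.exists_mul_swap hij hne
  have hw_eq : w = w * swap c d * swap c d := by simp [mul_assoc]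
  have hw' := finite_inversions_mul_swap hw hcd
  have hlt : invNum (w * swap c d) < invNum w := by
    conv_rhs => rw [hw_eq]
    exact ncard_inversions_lt_ncard_inversions_mul_swap hw' hcd (by simpa)
  exact .tail (bruhatLE_swap_of_crosses hij hw' h') ⟨⟨c, d, hcd, hw_eq⟩, hlt⟩
termination_by invNum w

theorem stmt0_general (n : ℕ) (w : Perm ℕ) (hw : ∀ k, n ≤ k → w k = k)
    (i j : ℕ) (hij : i < j) :
    BruhatLE (Equiv.swap i j) w ↔
      (∃ k, k ≤ i ∧ j ≤ w k) ∧ (∃ k, k ≤ i ∧ j ≤ w⁻¹ k) := by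
  rw [exists_le_inv_apply_iff]
  exact ⟨Crosses.of_bruhatLE,
    bruhatLE_swap_of_crosses hij (finite_inversions_of_forall_le_apply_eq hw)⟩

/-- Criterion for a transposition to lie below w in Bruhat order:
T_{i,j} ≤ w iff μ_w(i) ≥ j and μ_{w⁻¹}(i) ≥ j (0-based indices, w ∈ S_n). -/
theorem stmt0 (n : ℕ) (w : Perm ℕ) (hw : ∀ k, n ≤ k → w k = k)
    (i j : ℕ) (hij : i < j) (hjn : j < n) :
    BruhatLE (Equiv.swap i j) w ↔
      (∃ k, k ≤ i ∧ j ≤ w k) ∧ (∃ k, k ≤ i ∧ j ≤ w⁻¹ k) :=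
  stmt0_general n w hw i j hij
end

section
/- Let w ∈ S_n avoid the patterns 3412 and 4231, and suppose 1 ≤ i < j ≤ n satisfy: w fixes {1,...,i-1} setwise, w(i) ≥ j, and w(j) = i. Then w(i) > w(i+1) > ... > w(j), i.e., w is strictly decreasing on positions i through j. -/
open Equiv

/-!
Suppose `w k < w (k + 1)` for some `i ≤ k < j`. Since `w` preserves `[i, ∞)` and `w j = i`, the
ascent cannot end at `j`. If `w (k + 1) < w i`, then `i, k, k + 1, j` is a `4231`. Otherwise
`w (k + 1) > w i`, and the `w i - i - 1 ≥ j - i - 1` values strictly between `i` and `w i` cannot all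
sit at the `j - i - 2` positions strictly between `i` and `j` other than `k + 1`; one of them sits
at some `p > j`, and `i, k + 1, j, p` is a `3412`.
-/

namespace Equiv.Perm

theorem apply_mem_iff_of_image_eq {α : Type*} (w : Perm α) {s : Set α} (h : w '' s = s) (a : α) :
    w a ∈ s ↔ a ∈ s := by
  conv_lhs => rw [← h]
  exact w.injective.mem_set_image

section FixesInitialSegment

variable {w : Perm ℕ} {i j : ℕ} (hlow : ∀ m, w m < i ↔ m < i) (hwj : w j = i)
include hlow hwj

theorem lt_apply_of_ne {m : ℕ} (hm : i ≤ m) (hmj : m ≠ j) : i < w m := by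
  have hge : i ≤ w m := not_lt.mp fun h => absurd ((hlow m).mp h) (not_lt.mpr hm)
  exact hge.lt_of_ne fun h => hmj (w.injective (h.symm.trans hwj.symm))

theorem exists_gt_apply_mem_Ioo (hwi : j ≤ w i) {k : ℕ} (hik : i < k) (hkj : k < j)
    (hk : w i < w k) : ∃ p, j < p ∧ i < w p ∧ w p < w i := by
  classical
  have hcard : ((Finset.Ioo i j).erase k).card < ((Finset.Ioo i (w i)).image w.symm).card := by
    rw [Finset.card_erase_of_mem (by simp [hik, hkj]),
      Finset.card_image_of_injective _ w.symm.injective, Nat.card_Ioo, Nat.card_Ioo]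
    omega
  obtain ⟨p, hp, hpP⟩ := Finset.exists_mem_notMem_of_card_lt_card hcard
  obtain ⟨v, hv, rfl⟩ := Finset.mem_image.mp hp
  rw [Finset.mem_Ioo] at hv
  simp only [Finset.mem_erase, Finset.mem_Ioo, not_and_or, not_lt, ne_eq, not_not] at hpP
  refine ⟨w.symm v, ?_, by simpa using hv⟩
  have hwv : w (w.symm v) = v := w.apply_symm_apply v
  have hi : i ≤ w.symm v := not_lt.mp fun h => by have := (hlow _).mpr h; omega
  have hne_i : w.symm v ≠ i := fun h => by rw [h] at hwv; omega
  have hne_j : w.symm v ≠ j := fun h => by rw [h] at hwv; omega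
  have hne_k : w.symm v ≠ k := fun h => by rw [h] at hwv; omega
  omega

end FixesInitialSegment

end Equiv.Perm

theorem stmt4_general (w : Perm ℕ)
    (h3412 : Avoids3412 w) (h4231 : Avoids4231 w)
    (i j : ℕ)
    (hfix : (fun m => w m) '' {m | m < i} = {m | m < i})
    (hwi : j ≤ w i) (hwj : w j = i) :
    ∀ k, i ≤ k → k < j → w (k + 1) < w k := by
  have hlow (m : ℕ) : w m < i ↔ m < i := w.apply_mem_iff_of_image_eq hfix m
  intro k hik hkj
  by_contra! hasc
  have hasc : w k < w (k + 1) := hasc.lt_of_ne (w.injective.ne (by omega))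
  have hkj' : k + 1 < j := by
    refine lt_of_le_of_ne hkj fun hj => ?_
    subst hj
    have := Perm.lt_apply_of_ne hlow hwj hik (by omega)
    omega
  rcases lt_trichotomy (w i) (w (k + 1)) with hlt | heq | hgt
  · obtain ⟨p, hjp, hip, hpi⟩ :=
      Perm.exists_gt_apply_mem_Ioo hlow hwj hwi (by omega) hkj' hlt
    exact h3412 ⟨i, k + 1, j, p, by omega, hkj', hjp, by omega, hpi, hlt⟩
  · exact absurd (w.injective heq) (by omega)
  · have hik' : i < k := hik.lt_of_ne (by rintro rfl; omega)
    have hwk : i < w k := Perm.lt_apply_of_ne hlow hwj hik (by omega)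
    exact h4231 ⟨i, k, k + 1, j, hik', by omega, hkj', by omega, hasc, hgt⟩

/-- Lemma: with wedge data (i,j), a smooth w is strictly decreasing on
positions i,…,j. -/
theorem stmt4 (n : ℕ) (w : Perm ℕ) (hw : ∀ k, n ≤ k → w k = k)
    (h3412 : Avoids3412 w) (h4231 : Avoids4231 w)
    (i j : ℕ) (hij : i < j) (hjn : j < n)
    (hfix : (fun m => w m) '' {m | m < i} = {m | m < i})
    (hwi : j ≤ w i) (hwj : w j = i) :
    ∀ k, i ≤ k → k < j → w (k + 1) < w k :=
  stmt4_general w h3412 h4231 i j hfix hwi hwj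
end

section
/- Let w' ∈ S_n and let T_{i,j} and T_{k,l} be two commuting transpositions ({i,j} ∩ {k,l} = ∅). If ℓ(w'·T_{i,j}) = ℓ(w') + 1 and ℓ(w'·T_{i,j}·T_{k,l}) = ℓ(w') + 2, then also ℓ(w'·T_{k,l}) = ℓ(w') + 1 and ℓ(w'·T_{k,l}·T_{i,j}) = ℓ(w') + 2. -/
open Equiv

/-! Write `ℓ` for `invNum`. For permutations with finitely many inversions,
`ℓ(w * u) = ℓ(w) + ℓ(u) - 2 d`, where `d` counts the inversions `(p, q)` of `u` for which
`(u q, u p)` is an inversion of `w`. For `u = (a b)` with `w a < w b` this gives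
`ℓ(w * (a b)) = ℓ(w) + 1 + 2 N`, where `N` counts the positions strictly between `a` and `b`
whose values lie strictly between `w a` and `w b`; so the step raises `ℓ` by one exactly when
`w a < w b` and `N = 0`. With this criterion the two conditions for
`w' → w' T_{i,j} → w' T_{i,j} T_{k,l}` give those for the other order, by a case analysis on
where a violating position lies relative to `i, j, k, l`.

Since `Set.ncard` of an infinite set is `0`, it is the hypothesis `ℓ(w' T_{i,j}) = ℓ(w') + 1`
that makes the inversion set of `w'` finite. -/

open Finset

def invSet (w : Perm ℕ) : Set (ℕ × ℕ) := {p | p.1 < p.2 ∧ w p.2 < w p.1}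

theorem invNum_eq_ncard_invSet (w : Perm ℕ) : invNum w = (invSet w).ncard := rfl

section Product

variable {w u : Perm ℕ}

theorem invSet_mul_subset :
    invSet (w * u) ⊆ Equiv.prodCongr u u ⁻¹' invSet w ∪ invSet u := by
  rintro ⟨p, q⟩ ⟨hpq, hw⟩
  by_cases hu : u q < u p
  · exact Or.inr ⟨hpq, hu⟩
  · exact Or.inl ⟨lt_of_le_of_ne (not_lt.1 hu) (u.injective.ne hpq.ne), hw⟩

theorem Set.Finite.invSet_mul (hw : (invSet w).Finite) (hu : (invSet u).Finite) :
    (invSet (w * u)).Finite :=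
  ((hw.preimage (Equiv.prodCongr u u).injective.injOn).union hu).subset invSet_mul_subset

/-- An inversion `x` of `u` whose image `(u x.2, u x.1)` is an inversion of `w` is no longer an
inversion of `w * u`. -/
def undoneInv (w u : Perm ℕ) : Set (ℕ × ℕ) := {x ∈ invSet u | (u x.2, u x.1) ∈ invSet w}

theorem invSet_mul_inter : invSet (w * u) ∩ invSet u = invSet u \ undoneInv w u := by
  ext ⟨p, q⟩
  simp only [invSet, undoneInv, Set.mem_inter_iff, Set.mem_sdiff, Set.mem_ofPred_eq,
    Perm.mul_apply]
  constructor
  · rintro ⟨⟨_, hw⟩, hu⟩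
    exact ⟨hu, fun ⟨_, _, h⟩ => lt_asymm hw h⟩
  · rintro ⟨⟨hpq, hu⟩, hC⟩
    refine ⟨⟨hpq, ?_⟩, hpq, hu⟩
    rcases lt_trichotomy (w (u q)) (w (u p)) with h | h | h
    · exact h
    · exact absurd (u.injective (w.injective h)) hpq.ne'
    · exact absurd ⟨⟨hpq, hu⟩, hu, h⟩ hC

theorem invSet_mul_sdiff_union_image_swap :
    (invSet (w * u) \ invSet u) ∪ Prod.swap '' undoneInv w u =
      Equiv.prodCongr u u ⁻¹' invSet w := by
  ext ⟨p, q⟩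
  simp only [invSet, undoneInv, Set.mem_union, Set.mem_sdiff, Set.mem_image, Set.mem_preimage,
    Set.mem_ofPred_eq, Perm.mul_apply, prodCongr_apply, Prod.map, Prod.exists, Prod.swap_prod_mk,
    Prod.mk.injEq, not_and, not_lt]
  constructor
  · rintro (⟨⟨hpq, hw⟩, hu⟩ | ⟨x, y, ⟨⟨_, hu⟩, hw⟩, rfl, rfl⟩)
    · exact ⟨lt_of_le_of_ne (hu hpq) (u.injective.ne hpq.ne), hw⟩
    · exact hw
  · rintro ⟨hu, hw⟩
    rcases lt_trichotomy p q with h | rfl | h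
    · exact Or.inl ⟨⟨h, hw⟩, fun _ => hu.le⟩
    · exact absurd hu (lt_irrefl _)
    · exact Or.inr ⟨q, p, ⟨⟨h, hu⟩, hu, hw⟩, rfl, rfl⟩

theorem invNum_mul_add_two_mul (hw : (invSet w).Finite) (hu : (invSet u).Finite) :
    invNum (w * u) + 2 * (undoneInv w u).ncard = invNum w + invNum u := by
  have hC : (undoneInv w u).Finite := hu.subset fun _ hx => hx.1
  have hinter := Set.ncard_inter_add_ncard_sdiff_eq_ncard (invSet (w * u)) (invSet u)
    (hw.invSet_mul hu)
  have hundone : (invSet u \ undoneInv w u).ncard + (undoneInv w u).ncard = invNum u :=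
    Set.ncard_sdiff_add_ncard_of_subset (fun _ hx => hx.1) hu
  have hpreimage : (invSet (w * u) \ invSet u).ncard + (undoneInv w u).ncard = invNum w := by
    have hdisj : Disjoint (invSet (w * u) \ invSet u) (Prod.swap '' undoneInv w u) := by
      rw [Set.disjoint_left]
      rintro _ ⟨⟨hlt, _⟩, _⟩ ⟨_, ⟨⟨hlt', _⟩, _⟩, rfl⟩
      exact lt_asymm hlt hlt'
    rw [← Set.ncard_image_of_injective (undoneInv w u) Prod.swap_injective,
      ← Set.ncard_union_eq hdisj (hw.invSet_mul hu).sdiff (hC.image _),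
      invSet_mul_sdiff_union_image_swap,
      Set.ncard_preimage_of_injective_subset_range (Equiv.injective _) (by simp)]
    rfl
  rw [invSet_mul_inter] at hinter
  rw [invNum_eq_ncard_invSet (w * u)]
  omega

end Product

section Swap

variable {w : Perm ℕ} {a b : ℕ}

theorem invSet_swap (hab : a < b) :
    invSet (swap a b) = ↑({a} ×ˢ Ioc a b ∪ Ioo a b ×ˢ {b}) := by
  ext ⟨p, q⟩
  simp only [invSet, swap_apply_def, Set.mem_ofPred_eq, coe_union, coe_product, coe_singleton,
    coe_Ioc, coe_Ioo, Set.mem_union, Set.mem_prod, Set.mem_singleton_iff, Set.mem_Ioc,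
    Set.mem_Ioo]
  split_ifs <;> omega

theorem undoneInv_swap (hab : a < b) (hw : w a < w b) :
    undoneInv w (swap a b) =
      ↑({a} ×ˢ {m ∈ Ioo a b | w b < w m} ∪ {m ∈ Ioo a b | w m < w a} ×ˢ {b}) := by
  ext ⟨p, q⟩
  simp only [undoneInv, invSet, swap_apply_def, Set.mem_ofPred_eq, coe_union, coe_product,
    coe_singleton, coe_filter, Set.mem_union, Set.mem_prod, Set.mem_singleton_iff]
  split_ifs <;> grind

theorem finite_invSet_swap (hab : a < b) : (invSet (swap a b)).Finite := by
  rw [invSet_swap hab]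
  exact finite_toSet _

theorem invNum_swap (hab : a < b) : invNum (swap a b) = #(Ioc a b) + #(Ioo a b) := by
  rw [invNum_eq_ncard_invSet, invSet_swap hab, Set.ncard_coe_finset,
    card_union_of_disjoint (disjoint_product.2 (Or.inl (by simp))), card_product,
    card_product, card_singleton, card_singleton, one_mul, mul_one]

theorem card_undoneInv_swap (hab : a < b) (hw : w a < w b) :
    (undoneInv w (swap a b)).ncard =
      #{m ∈ Ioo a b | w b < w m} + #{m ∈ Ioo a b | w m < w a} := by
  rw [undoneInv_swap hab hw, Set.ncard_coe_finset,
    card_union_of_disjoint (disjoint_product.2 (Or.inl (by simp))), card_product,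
    card_product, card_singleton, card_singleton, one_mul, mul_one]

theorem card_Ioo_eq_add_card_filter (hw : w a < w b) :
    #(Ioo a b) = #{m ∈ Ioo a b | w b < w m} + #{m ∈ Ioo a b | w m < w a} +
      #{m ∈ Ioo a b | w a < w m ∧ w m < w b} := by
  rw [card_eq_sum_ones, card_filter, card_filter, card_filter, ← sum_add_distrib,
    ← sum_add_distrib]
  refine sum_congr rfl fun m hm => ?_
  have hma : w m ≠ w a := w.injective.ne (mem_Ioo.1 hm).1.ne'
  have hmb : w m ≠ w b := w.injective.ne (mem_Ioo.1 hm).2.ne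
  split_ifs <;> omega

theorem invNum_mul_swap_of_lt (hab : a < b) (hw : w a < w b)
    (hfin : (invSet w).Finite) :
    invNum (w * swap a b) = invNum w + 2 * #{m ∈ Ioo a b | w a < w m ∧ w m < w b} + 1 := by
  have key := invNum_mul_add_two_mul hfin (finite_invSet_swap hab)
  rw [card_undoneInv_swap hab hw, invNum_swap hab] at key
  have := card_Ioo_eq_add_card_filter hw
  have : #(Ioc a b) = #(Ioo a b) + 1 := by simp only [Nat.card_Ioc, Nat.card_Ioo]; omega
  omega

def CoversBySwap (w : Perm ℕ) (a b : ℕ) : Prop :=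
  w a < w b ∧ ∀ m ∈ Ioo a b, ¬(w a < w m ∧ w m < w b)

theorem invNum_mul_swap_eq_add_one_iff (hab : a < b)
    (hfin : (invSet w).Finite) :
    invNum (w * swap a b) = invNum w + 1 ↔ CoversBySwap w a b := by
  rcases lt_or_gt_of_ne (w.injective.ne hab.ne) with hw | hw
  · rw [invNum_mul_swap_of_lt hab hw hfin, CoversBySwap, ← filter_eq_empty_iff, ← card_eq_zero]
    simp only [hw, true_and]
    omega
  · set v := w * swap a b
    have hv : v a < v b := by simpa [v] using hw
    have hdesc := invNum_mul_swap_of_lt hab hv (hfin.invSet_mul (finite_invSet_swap hab))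
    rw [mul_swap_mul_self] at hdesc
    simp only [CoversBySwap, hw.not_gt, false_and, iff_false]
    omega

theorem finite_invSet_of_invNum_mul_swap (hab : a < b)
    (h : invNum (w * swap a b) = invNum w + 1) : (invSet w).Finite := by
  by_contra hinf
  have hinf' : ¬ (invSet (w * swap a b)).Finite := fun hfin => hinf <| by
    simpa [mul_assoc] using hfin.invSet_mul (finite_invSet_swap hab)
  rw [invNum_eq_ncard_invSet, invNum_eq_ncard_invSet, Set.Infinite.ncard hinf,
    Set.Infinite.ncard hinf'] at h
  omega

theorem mul_swap_apply_of_ne_of_ne {m : ℕ} (hma : m ≠ a) (hmb : m ≠ b) :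
    (w * swap a b) m = w m :=
  congrArg w (swap_apply_of_ne_of_ne hma hmb)

end Swap

section Commuting

variable {w : Perm ℕ} {i j k l : ℕ}

theorem CoversBySwap.of_mul_swap (hij : i < j) (hik : i ≠ k) (hil : i ≠ l) (hjk : j ≠ k)
    (hjl : j ≠ l) (h : CoversBySwap w i j) (h' : CoversBySwap (w * swap i j) k l) :
    CoversBySwap w k l := by
  obtain ⟨hwij, hbij⟩ := h
  obtain ⟨hvkl, hbkl⟩ := h'
  rw [mul_swap_apply_of_ne_of_ne hik.symm hjk.symm, mul_swap_apply_of_ne_of_ne hil.symm hjl.symm]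
    at hvkl hbkl
  refine ⟨hvkl, fun m hm hmid => ?_⟩
  obtain ⟨hkm, hml⟩ := mem_Ioo.1 hm
  by_cases hmi : m = i
  · subst hmi
    have hj := hbkl m hm
    rw [Perm.mul_apply, swap_apply_left] at hj
    rcases lt_or_gt_of_ne hjl with hjl' | hlj
    · have hi := hbkl j (mem_Ioo.2 ⟨by omega, hjl'⟩)
      rw [Perm.mul_apply, swap_apply_right] at hi
      omega
    · have := w.injective.ne hjl
      have := hbij l (mem_Ioo.2 ⟨by omega, hlj⟩)
      omega
  by_cases hmj : m = j
  · subst hmj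
    have hi := hbkl m hm
    rw [Perm.mul_apply, swap_apply_right] at hi
    rcases lt_or_gt_of_ne hik with hik' | hki
    · have := w.injective.ne hik
      have := hbij k (mem_Ioo.2 ⟨hik', by omega⟩)
      omega
    · have hj := hbkl i (mem_Ioo.2 ⟨hki, by omega⟩)
      rw [Perm.mul_apply, swap_apply_left] at hj
      omega
  · have := hbkl m hm
    rw [mul_swap_apply_of_ne_of_ne hmi hmj] at this
    exact this hmid

theorem CoversBySwap.mul_swap_of_mul_swap (hkl : k < l) (hik : i ≠ k) (hil : i ≠ l)
    (hjk : j ≠ k) (hjl : j ≠ l) (h : CoversBySwap w i j)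
    (h' : CoversBySwap (w * swap i j) k l) :
    CoversBySwap (w * swap k l) i j := by
  obtain ⟨hwij, hbij⟩ := h
  obtain ⟨hvkl, hbkl⟩ := h'
  rw [mul_swap_apply_of_ne_of_ne hik.symm hjk.symm, mul_swap_apply_of_ne_of_ne hil.symm hjl.symm]
    at hvkl hbkl
  rw [CoversBySwap, mul_swap_apply_of_ne_of_ne hik hil, mul_swap_apply_of_ne_of_ne hjk hjl]
  refine ⟨hwij, fun m hm hmid => ?_⟩
  obtain ⟨him, hmj⟩ := mem_Ioo.1 hm
  by_cases hmk : m = k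
  · subst hmk
    rw [Perm.mul_apply, swap_apply_left] at hmid
    rcases lt_or_gt_of_ne hjl with hjl' | hlj
    · have hi := hbkl j (mem_Ioo.2 ⟨hmj, hjl'⟩)
      rw [Perm.mul_apply, swap_apply_right] at hi
      have := w.injective.ne hik
      have := hbij m hm
      omega
    · exact hbij l (mem_Ioo.2 ⟨by omega, hlj⟩) hmid
  by_cases hml : m = l
  · subst hml
    rw [Perm.mul_apply, swap_apply_right] at hmid
    rcases lt_or_gt_of_ne hik with hik' | hki
    · exact hbij k (mem_Ioo.2 ⟨hik', by omega⟩) hmid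
    · have hj := hbkl i (mem_Ioo.2 ⟨hki, him⟩)
      rw [Perm.mul_apply, swap_apply_left] at hj
      have := w.injective.ne hjl
      have := hbij m hm
      omega
  · rw [mul_swap_apply_of_ne_of_ne hmk hml] at hmid
    exact hbij m hm hmid

end Commuting

/-- Saturated chains of length two through commuting transpositions can be
traversed in either order. -/
theorem stmt10 (w' : Perm ℕ) (i j k l : ℕ) (hij : i < j) (hkl : k < l)
    (h1 : i ≠ k) (h2 : i ≠ l) (h3 : j ≠ k) (h4 : j ≠ l)
    (hstep1 : invNum (w' * Equiv.swap i j) = invNum w' + 1)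
    (hstep2 : invNum (w' * Equiv.swap i j * Equiv.swap k l) = invNum w' + 2) :
    invNum (w' * Equiv.swap k l) = invNum w' + 1 ∧
      invNum (w' * Equiv.swap k l * Equiv.swap i j) = invNum w' + 2 := by
  have hfin := finite_invSet_of_invNum_mul_swap hij hstep1
  have hcover := (invNum_mul_swap_eq_add_one_iff hij hfin).1 hstep1
  have hcover' := (invNum_mul_swap_eq_add_one_iff hkl
    (hfin.invSet_mul (finite_invSet_swap hij))).1 (by omega)
  have hstep1' := (invNum_mul_swap_eq_add_one_iff hkl hfin).2
    (hcover.of_mul_swap hij h1 h2 h3 h4 hcover')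
  have hstep2' := (invNum_mul_swap_eq_add_one_iff hij
    (hfin.invSet_mul (finite_invSet_swap hkl))).2
    (hcover.mul_swap_of_mul_swap hkl h1 h2 h3 h4 hcover')
  omega
end

section
/- Let w' ∈ S_n and 1 ≤ i < j < k ≤ n. If each of the three steps w' → w'·T_{i,j} → w'·T_{i,j}·T_{i,k} → w'·T_{i,j}·T_{i,k}·T_{j,k} increases the length ℓ by exactly 1, then each of the three steps w' → w'·T_{j,k} → w'·T_{j,k}·T_{i,k} → w'·T_{j,k}·T_{i,k}·T_{i,j} also increases ℓ by exactly 1. -/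
open Equiv

namespace Stmt11Aux

def InvSet (w : Perm ℕ) : Set (ℕ × ℕ) := {p | p.1 < p.2 ∧ w p.2 < w p.1}

lemma invNum_def (w : Perm ℕ) : invNum w = (InvSet w).ncard := rfl

def Fset (a b : ℕ) : Set (ℕ × ℕ) :=
  {p | p.1 < p.2 ∧ a ≤ p.1 ∧ p.2 ≤ b ∧ (p.1 = a ∨ p.2 = b)}

lemma Fset_finite (a b : ℕ) : (Fset a b).Finite := by
  apply Set.Finite.subset (Set.finite_Icc ((a : ℕ), a) (b, b))
  rintro ⟨x, y⟩ ⟨h1, h2, h3, _⟩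
  simp only [Set.mem_Icc, Prod.le_def]
  omega

lemma mapsOut {a b : ℕ} (hab : a < b) {x y : ℕ} (h1 : x < y) (h2 : (x, y) ∉ Fset a b) :
    swap a b x < swap a b y ∧ (swap a b x, swap a b y) ∉ Fset a b := by
  simp only [Fset, Set.mem_setOf_eq, swap_apply_def] at h2 ⊢
  split_ifs <;> omega

lemma sigma_sigma (a b : ℕ) (x y : ℕ) :
    Prod.map (swap a b) (swap a b) ((swap a b x, swap a b y)) = (x, y) := by
  simp [swap_apply_self]

lemma invSet_mul_subset (w : Perm ℕ) {a b : ℕ} (hab : a < b) :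
    InvSet (w * swap a b) ⊆ Fset a b ∪ (Prod.map (swap a b) (swap a b)) '' InvSet w := by
  rintro ⟨x, y⟩ ⟨h1, h2⟩
  by_cases hF : (x, y) ∈ Fset a b
  · exact Or.inl hF
  · right
    obtain ⟨hs, _⟩ := mapsOut hab h1 hF
    refine ⟨(swap a b x, swap a b y), ⟨hs, ?_⟩, sigma_sigma a b x y⟩
    simpa [Perm.mul_apply] using h2

lemma fin_mul (w : Perm ℕ) {a b : ℕ} (hab : a < b) (hfin : (InvSet w).Finite) :
    (InvSet (w * swap a b)).Finite :=
  Set.Finite.subset ((Fset_finite a b).union (hfin.image _)) (invSet_mul_subset w hab)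

lemma fin_of_mul (w : Perm ℕ) {a b : ℕ} (hab : a < b)
    (hfin : (InvSet (w * swap a b)).Finite) : (InvSet w).Finite := by
  have := fin_mul (w * swap a b) hab hfin
  rwa [mul_assoc, swap_mul_self, mul_one] at this

lemma image_diff (w : Perm ℕ) {a b : ℕ} (hab : a < b) :
    (Prod.map (swap a b) (swap a b)) '' (InvSet (w * swap a b) \ Fset a b)
      = InvSet w \ Fset a b := by
  ext ⟨x, y⟩
  constructor
  · rintro ⟨⟨u, v⟩, ⟨⟨h1, h2⟩, hF⟩, heq⟩
    obtain ⟨hs, hFs⟩ := mapsOut hab h1 hF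
    rw [Prod.map_apply] at heq
    rw [← heq]
    exact ⟨⟨hs, by simpa [Perm.mul_apply] using h2⟩, hFs⟩
  · rintro ⟨⟨h1, h2⟩, hF⟩
    obtain ⟨hs, hFs⟩ := mapsOut hab h1 hF
    refine ⟨(swap a b x, swap a b y), ⟨⟨hs, ?_⟩, hFs⟩, sigma_sigma a b x y⟩
    simpa [Perm.mul_apply, swap_apply_self] using h2

lemma inter_eq (v : Perm ℕ) {a b : ℕ} (hab : a < b) :
    InvSet v ∩ Fset a b =
      ↑(((Finset.Ioc a b).filter (fun q => v q < v a)).image (fun q => ((a : ℕ), q)) ∪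
        ((Finset.Ioo a b).filter (fun q => v b < v q)).image (fun q => (q, (b : ℕ)))) := by
  ext ⟨x, y⟩
  simp only [InvSet, Fset, Set.mem_inter_iff, Set.mem_setOf_eq, Finset.coe_union,
    Set.mem_union, Finset.coe_image, Set.mem_image, Finset.mem_coe, Finset.mem_filter,
    Finset.mem_Ioc, Finset.mem_Ioo, Prod.mk.injEq]
  constructor
  · rintro ⟨⟨h1, h2⟩, _, ha, hb, hor⟩
    by_cases hxa : x = a
    · subst hxa
      exact Or.inl ⟨y, ⟨⟨h1, hb⟩, h2⟩, rfl, rfl⟩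
    · rcases hor with h | rfl
      · exact absurd h hxa
      · exact Or.inr ⟨x, ⟨⟨lt_of_le_of_ne ha (Ne.symm hxa), h1⟩, h2⟩, rfl, rfl⟩
  · rintro (⟨q, ⟨⟨hq1, hq2⟩, hv⟩, rfl, rfl⟩ | ⟨q, ⟨⟨hq1, hq2⟩, hv⟩, rfl, rfl⟩)
    · exact ⟨⟨hq1, hv⟩, hq1, le_refl a, hq2, Or.inl rfl⟩
    · exact ⟨⟨hq2, hv⟩, hq2, hq1.le, le_refl b, Or.inr rfl⟩

lemma inter_ncard (v : Perm ℕ) {a b : ℕ} (hab : a < b) :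
    (InvSet v ∩ Fset a b).ncard =
      ((Finset.Ioc a b).filter (fun q => v q < v a)).card +
        ((Finset.Ioo a b).filter (fun q => v b < v q)).card := by
  rw [inter_eq v hab, Set.ncard_coe_finset, Finset.card_union_of_disjoint, 
    Finset.card_image_of_injective, Finset.card_image_of_injective]
  · exact fun p q h => by simpa using h
  · exact fun p q h => by simpa using h
  · rw [Finset.disjoint_left]
    rintro ⟨x, y⟩ hx hy
    simp only [Finset.mem_image, Finset.mem_filter, Finset.mem_Ioc, Finset.mem_Ioo,
      Prod.mk.injEq] at hx hy
    obtain ⟨q, ⟨⟨hq1, _⟩, _⟩, rfl, rfl⟩ := hx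
    obtain ⟨r, ⟨⟨hr1, _⟩, _⟩, hr, _⟩ := hy
    omega



lemma mulswap_apply_left (w : Perm ℕ) (a b : ℕ) : (w * swap a b) a = w b := by
  simp [Perm.mul_apply]

lemma mulswap_apply_right (w : Perm ℕ) (a b : ℕ) : (w * swap a b) b = w a := by
  simp [Perm.mul_apply]

lemma mulswap_apply_of_ne (w : Perm ℕ) (a b x : ℕ) (h1 : x ≠ a) (h2 : x ≠ b) :
    (w * swap a b) x = w x := by
  simp [Perm.mul_apply, swap_apply_of_ne_of_ne h1 h2]

lemma filter_Ioc_of_lt (w : Perm ℕ) {a b : ℕ} (hab : a < b) (hlt : w a < w b) :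
    (Finset.Ioc a b).filter (fun q => w q < w a)
      = (Finset.Ioo a b).filter (fun q => w q < w a) := by
  ext q
  simp only [Finset.mem_filter, Finset.mem_Ioc, Finset.mem_Ioo]
  constructor
  · rintro ⟨⟨h1, h2⟩, h3⟩
    refine ⟨⟨h1, h2.lt_of_ne ?_⟩, h3⟩
    rintro rfl
    exact absurd h3 (not_lt.2 hlt.le)
  · rintro ⟨⟨h1, h2⟩, h3⟩
    exact ⟨⟨h1, h2.le⟩, h3⟩

lemma trichot (w : Perm ℕ) {a b : ℕ} (hab : a < b) (hlt : w a < w b) :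
    ((Finset.Ioo a b).filter (fun q => w q < w b)).card
        = ((Finset.Ioo a b).filter (fun q => w q < w a)).card
          + ((Finset.Ioo a b).filter (fun q => w a < w q ∧ w q < w b)).card ∧
      ((Finset.Ioo a b).filter (fun q => w a < w q)).card
        = ((Finset.Ioo a b).filter (fun q => w b < w q)).card
          + ((Finset.Ioo a b).filter (fun q => w a < w q ∧ w q < w b)).card := by
  have hne : ∀ q ∈ Finset.Ioo a b, w q ≠ w a ∧ w q ≠ w b := by
    intro q hq
    simp only [Finset.mem_Ioo] at hq
    exact ⟨fun h => (by omega : q ≠ a) (w.injective h),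
      fun h => (by omega : q ≠ b) (w.injective h)⟩
  constructor
  · rw [← Finset.card_union_of_disjoint (by
      rw [Finset.disjoint_left]
      intro q hq hq'
      simp only [Finset.mem_filter] at hq hq'
      omega), ← Finset.filter_or]
    congr 1
    apply Finset.filter_congr
    intro q hq
    obtain ⟨h1, h2⟩ := hne q hq
    constructor
    · intro h; omega
    · intro h; omega
  · rw [← Finset.card_union_of_disjoint (by
      rw [Finset.disjoint_left]
      intro q hq hq'
      simp only [Finset.mem_filter] at hq hq'
      omega), ← Finset.filter_or]
    congr 1
    apply Finset.filter_congr
    intro q hq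
    obtain ⟨h1, h2⟩ := hne q hq
    constructor
    · intro h; omega
    · intro h; omega

lemma step_up (w : Perm ℕ) {a b : ℕ} (hab : a < b) (hfin : (InvSet w).Finite)
    (hlt : w a < w b) :
    invNum (w * swap a b) = invNum w + 1 +
      2 * ((Finset.Ioo a b).filter (fun q => w a < w q ∧ w q < w b)).card := by
  have hfin' : (InvSet (w * swap a b)).Finite := fin_mul w hab hfin
  have hsplit : ∀ u : Perm ℕ, (InvSet u).Finite →
      (InvSet u).ncard = (InvSet u ∩ Fset a b).ncard + (InvSet u \ Fset a b).ncard :=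
    fun u hu => (Set.ncard_inter_add_ncard_diff_eq_ncard _ _ hu).symm
  have hD : (InvSet (w * swap a b) \ Fset a b).ncard = (InvSet w \ Fset a b).ncard := by
    rw [← image_diff w hab, Set.ncard_image_of_injective _
      ((swap a b).injective.prodMap (swap a b).injective)]
  have hiw : (InvSet w ∩ Fset a b).ncard =
      ((Finset.Ioo a b).filter (fun q => w q < w a)).card +
        ((Finset.Ioo a b).filter (fun q => w b < w q)).card := by
    rw [inter_ncard w hab, filter_Ioc_of_lt w hab hlt]
  have hiv : (InvSet (w * swap a b) ∩ Fset a b).ncard =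
      (1 + ((Finset.Ioo a b).filter (fun q => w q < w b)).card) +
        ((Finset.Ioo a b).filter (fun q => w a < w q)).card := by
    rw [inter_ncard (w * swap a b) hab]
    congr 1
    · have hfe : (Finset.Ioo a b).filter (fun q => (w * swap a b) q < (w * swap a b) a)
          = (Finset.Ioo a b).filter (fun q => w q < w b) := by
        apply Finset.filter_congr
        intro q hq
        simp only [Finset.mem_Ioo] at hq
        rw [mulswap_apply_left, mulswap_apply_of_ne w a b q (by omega) (by omega)]
      rw [← Finset.Ioo_insert_right hab, Finset.filter_insert,
        if_pos (by rw [mulswap_apply_left, mulswap_apply_right]; exact hlt),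
        Finset.card_insert_of_notMem (by simp), hfe, add_comm]
    · have hfe : (Finset.Ioo a b).filter (fun q => (w * swap a b) b < (w * swap a b) q)
          = (Finset.Ioo a b).filter (fun q => w a < w q) := by
        apply Finset.filter_congr
        intro q hq
        simp only [Finset.mem_Ioo] at hq
        rw [mulswap_apply_right, mulswap_apply_of_ne w a b q (by omega) (by omega)]
      rw [hfe]
  obtain ⟨t1, t2⟩ := trichot w hab hlt
  rw [invNum_def, invNum_def, hsplit _ hfin', hsplit _ hfin, hD, hiw, hiv]
  omega

lemma extract (w : Perm ℕ) {a b : ℕ} (hab : a < b) (hfin : (InvSet w).Finite)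
    (h : invNum (w * swap a b) = invNum w + 1) :
    w a < w b ∧ ∀ c, a < c → c < b → ¬(w a < w c ∧ w c < w b) := by
  have hne : w a ≠ w b := fun h' => absurd (w.injective h') (by omega)
  rcases hne.lt_or_gt with hlt | hgt
  · have hs := step_up w hab hfin hlt
    rw [h] at hs
    have hm : ((Finset.Ioo a b).filter (fun q => w a < w q ∧ w q < w b)).card = 0 := by
      omega
    rw [Finset.card_eq_zero, Finset.filter_eq_empty_iff] at hm
    exact ⟨hlt, fun c hc1 hc2 hc3 => hm (Finset.mem_Ioo.2 ⟨hc1, hc2⟩) hc3⟩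
  · exfalso
    have hfin' := fin_mul w hab hfin
    have hlt' : (w * swap a b) a < (w * swap a b) b := by
      rw [mulswap_apply_left, mulswap_apply_right]; exact hgt
    have hs := step_up (w * swap a b) hab hfin' hlt'
    rw [mul_assoc, swap_mul_self, mul_one] at hs
    omega

lemma apply_up (w : Perm ℕ) {a b : ℕ} (hab : a < b) (hfin : (InvSet w).Finite)
    (hlt : w a < w b) (hempty : ∀ c, a < c → c < b → ¬(w a < w c ∧ w c < w b)) :
    invNum (w * swap a b) = invNum w + 1 := by
  have hs := step_up w hab hfin hlt
  have hm : ((Finset.Ioo a b).filter (fun q => w a < w q ∧ w q < w b)).card = 0 := by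
    rw [Finset.card_eq_zero, Finset.filter_eq_empty_iff]
    intro q hq
    exact hempty q (Finset.mem_Ioo.1 hq).1 (Finset.mem_Ioo.1 hq).2
  omega

end Stmt11Aux

open Stmt11Aux in
/-- If w' → w'T_{i,j} → w'T_{i,j}T_{i,k} → w'T_{i,j}T_{i,k}T_{j,k} is a
saturated chain, then so is w' → w'T_{j,k} → w'T_{j,k}T_{i,k} → w'T_{j,k}T_{i,k}T_{i,j}. -/
theorem stmt11 (w' : Perm ℕ) (i j k : ℕ) (hij : i < j) (hjk : j < k)
    (h1 : invNum (w' * Equiv.swap i j) = invNum w' + 1)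
    (h2 : invNum (w' * Equiv.swap i j * Equiv.swap i k) = invNum w' + 2)
    (h3 : invNum (w' * Equiv.swap i j * Equiv.swap i k * Equiv.swap j k)
      = invNum w' + 3) :
    invNum (w' * Equiv.swap j k) = invNum w' + 1 ∧
      invNum (w' * Equiv.swap j k * Equiv.swap i k) = invNum w' + 2 ∧
      invNum (w' * Equiv.swap j k * Equiv.swap i k * Equiv.swap i j)
        = invNum w' + 3 := by
  have hik : i < k := hij.trans hjk
  -- finiteness of the inversion set of w'
  have hfinU : (InvSet w').Finite := by
    by_contra hinf
    have h1' : ¬ (InvSet (w' * swap i j)).Finite := fun hf => hinf (fin_of_mul w' hij hf)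
    have e1 : invNum (w' * swap i j) = 0 := by
      rw [invNum_def]; exact Set.Infinite.ncard h1'
    have e2 : invNum w' = 0 := by
      rw [invNum_def]; exact Set.Infinite.ncard hinf
    omega
  have hfin1 : (InvSet (w' * swap i j)).Finite := fin_mul w' hij hfinU
  have hfin2 : (InvSet (w' * swap i j * swap i k)).Finite := fin_mul _ hik hfin1
  -- extract conditions from the three hypotheses
  obtain ⟨vij, hA⟩ := extract w' hij hfinU h1
  obtain ⟨vjk', hB'⟩ := extract (w' * swap i j) hik hfin1 (by omega)
  obtain ⟨_, hC'⟩ := extract (w' * swap i j * swap i k) hjk hfin2 (by omega)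
  -- translate values
  have vjk : w' j < w' k := by
    rwa [mulswap_apply_left, mulswap_apply_of_ne w' i j k (by omega) (by omega)] at vjk'
  have hB : ∀ c, i < c → c < k → c ≠ j → ¬(w' j < w' c ∧ w' c < w' k) := by
    intro c hc1 hc2 hc3 hcon
    apply hB' c hc1 hc2
    rwa [mulswap_apply_left, mulswap_apply_of_ne w' i j k (by omega) (by omega),
      mulswap_apply_of_ne w' i j c (by omega) hc3]
  have hC : ∀ c, j < c → c < k → ¬(w' i < w' c ∧ w' c < w' j) := by
    intro c hc1 hc2 hcon
    apply hC' c hc1 hc2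
    have e1 : (w' * swap i j * swap i k) j = w' i := by
      rw [mulswap_apply_of_ne _ i k j (by omega) (by omega), mulswap_apply_right]
    have e2 : (w' * swap i j * swap i k) k = w' j := by
      rw [mulswap_apply_right, mulswap_apply_left]
    have e3 : (w' * swap i j * swap i k) c = w' c := by
      rw [mulswap_apply_of_ne _ i k c (by omega) (by omega),
        mulswap_apply_of_ne w' i j c (by omega) (by omega)]
    rw [e1, e2, e3]
    exact hcon
  -- first step
  have g1 : invNum (w' * swap j k) = invNum w' + 1 := by
    apply apply_up w' hjk hfinU vjk
    intro c hc1 hc2 hcon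
    exact hB c (by omega) hc2 (by omega) hcon
  -- second step
  have hfinV1 : (InvSet (w' * swap j k)).Finite := fin_mul w' hjk hfinU
  have v1i : (w' * swap j k) i = w' i := mulswap_apply_of_ne w' j k i (by omega) (by omega)
  have v1j : (w' * swap j k) j = w' k := mulswap_apply_left w' j k
  have v1k : (w' * swap j k) k = w' j := mulswap_apply_right w' j k
  have g2 : invNum (w' * swap j k * swap i k) = invNum (w' * swap j k) + 1 := by
    apply apply_up _ hik hfinV1 (by rw [v1i, v1k]; exact vij)
    intro c hc1 hc2 hcon
    rw [v1i, v1k] at hcon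
    by_cases hcj : c = j
    · subst hcj
      rw [v1j] at hcon
      omega
    · rw [mulswap_apply_of_ne w' j k c hcj (by omega)] at hcon
      rcases lt_or_gt_of_ne hcj with h | h
      · exact hA c hc1 h hcon
      · exact hC c h hc2 hcon
  -- third step
  have hfinV2 : (InvSet (w' * swap j k * swap i k)).Finite := fin_mul _ hik hfinV1
  have v2i : (w' * swap j k * swap i k) i = w' j := by
    rw [mulswap_apply_left, v1k]
  have v2j : (w' * swap j k * swap i k) j = w' k := by
    rw [mulswap_apply_of_ne _ i k j (by omega) (by omega), v1j]
  have g3 : invNum (w' * swap j k * swap i k * swap i j)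
      = invNum (w' * swap j k * swap i k) + 1 := by
    apply apply_up _ hij hfinV2 (by rw [v2i, v2j]; exact vjk)
    intro c hc1 hc2 hcon
    rw [v2i, v2j, mulswap_apply_of_ne _ i k c (by omega) (by omega),
      mulswap_apply_of_ne w' j k c (by omega) (by omega)] at hcon
    exact hB c hc1 (by omega) (by omega) hcon
  refine ⟨g1, by omega, by omega⟩
end

section
/- Let w ∈ S_n be such that w fixes {1,...,i-1} setwise, w(i) ≥ j, and w(j) = i, for some i < j ≤ n. Then for every r with i < r ≤ j, the transposition T_{i,r} is below w in Bruhat order. -/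
/-!
Descend from `w` in Bruhat order by removing inversions, `v ↦ v * swap a b` with `a < b`,
`v b < v a` (this lowers `invNum`), while keeping the invariant that `v` stabilises
`{0, …, i - 1}` and `r ≤ v i`, `r ≤ v⁻¹ i`. An inversion avoiding the positions `i` and
`v⁻¹ i` can always be removed. Failing that, swapping `r` with `v⁻¹ i` brings `v⁻¹ i` down to
`r`, and then swapping `i` with `v⁻¹ r` brings `v i` down to `r`. When none of these moves is
available, `v` swaps `i` and `r` and is increasing elsewhere, so `v = T_{i,r}`.
-/

open Equiv

def inversionSet (v : Perm ℕ) : Set (ℕ × ℕ) := {p | p.1 < p.2 ∧ v p.2 < v p.1}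

section Inversions

variable {v : Perm ℕ} {N a b : ℕ}

lemma apply_lt_of_fixed_ge (hv : ∀ k, N ≤ k → v k = k) {p : ℕ} (hp : p < N) : v p < N := by
  by_contra! h
  have : v p = p := v.injective (hv _ h)
  omega

lemma inversionSet_finite (hv : ∀ k, N ≤ k → v k = k) : (inversionSet v).Finite := by
  refine ((Set.finite_Iio N).prod (Set.finite_Iio N)).subset ?_
  rintro ⟨p, q⟩ ⟨hpq, hqp : v q < v p⟩
  have hq : q < N := by
    by_contra! hq
    rw [hv q hq] at hqp
    have hp : N ≤ p := by
      by_contra! hp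
      have := apply_lt_of_fixed_ge hv hp
      omega
    rw [hv p hp] at hqp
    omega
  exact ⟨by simp only [Set.mem_Iio]; omega, hq⟩

lemma invNum_mul_swap_lt (hv : ∀ k, N ≤ k → v k = k) (hab : a < b) (hba : v b < v a) :
    invNum (v * swap a b) < invNum v := by
  -- `g` keeps the pairs `(a, x)` and `(x, b)` with `a < x < b` and applies `swap a b` to both
  -- coordinates of every other pair: an injection of the inversions of `v * swap a b` into
  -- those of `v` other than `(a, b)`.
  set g : ℕ × ℕ → ℕ × ℕ := fun x =>
    if x.1 = a ∧ x.2 < b ∨ x.2 = b ∧ a < x.1 then x else (swap a b x.1, swap a b x.2) with hg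
  have hmaps : Set.MapsTo g (inversionSet (v * swap a b)) (inversionSet v \ {(a, b)}) := by
    rintro ⟨p, q⟩ ⟨hpq, hinv : v (swap a b q) < v (swap a b p)⟩
    simp only [swap_apply_def] at hinv
    simp only [hg, inversionSet, Set.mem_sdiff, Set.mem_ofPred_eq, Set.mem_singleton_iff,
      swap_apply_def]
    split_ifs at hinv ⊢ <;> simp only [Prod.mk.injEq] <;> subst_vars <;> omega
  have hinv : Set.LeftInvOn g g (inversionSet (v * swap a b)) := by
    rintro ⟨p, q⟩ ⟨hpq, hinv : v (swap a b q) < v (swap a b p)⟩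
    simp only [swap_apply_def] at hinv
    simp only [hg, swap_apply_def]
    split_ifs at hinv ⊢ <;> subst_vars <;> dsimp only at * <;> simp only [Prod.mk.injEq] <;> omega
  have hfin := inversionSet_finite hv
  calc invNum (v * swap a b) = (g '' inversionSet (v * swap a b)).ncard :=
        (hinv.injOn.ncard_image).symm
    _ ≤ (inversionSet v \ {(a, b)}).ncard := Set.ncard_le_ncard hmaps.image_subset hfin.sdiff
    _ < invNum v := Set.ncard_sdiff_singleton_lt_of_mem ⟨hab, hba⟩ hfin

lemma exists_fixed_ge_mul_swap (hv : ∀ k, N ≤ k → v k = k) (a b : ℕ) :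
    ∃ M, ∀ k, M ≤ k → (v * swap a b) k = k :=
  ⟨max N (max a b + 1), fun k hk => by
    rw [Perm.mul_apply, swap_apply_of_ne_of_ne (by omega) (by omega), hv k (by omega)]⟩

end Inversions

lemma BruhatLE.of_mul_swap {t v : Perm ℕ} {N a b : ℕ} (hv : ∀ k, N ≤ k → v k = k)
    (hab : a < b) (hba : v b < v a) (h : BruhatLE t (v * swap a b)) : BruhatLE t v :=
  h.tail ⟨⟨a, b, hab, by rw [mul_assoc, swap_mul_self, mul_one]⟩,
    invNum_mul_swap_lt hv hab hba⟩

theorem bruhatLE_of_forall_ne_exists_inversion {t : Perm ℕ} {P : Perm ℕ → Prop}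
    (hfin : ∀ v, P v → ∃ N, ∀ k, N ≤ k → v k = k)
    (hstep : ∀ v, P v → v ≠ t → ∃ a b, a < b ∧ v b < v a ∧ P (v * swap a b)) :
    ∀ v, P v → BruhatLE t v := by
  intro v
  induction hn : invNum v using Nat.strong_induction_on generalizing v with
  | _ n ih =>
    intro hv
    by_cases ht : v = t
    · exact ht ▸ .refl
    obtain ⟨a, b, hab, hba, hP⟩ := hstep v hv ht
    obtain ⟨N, hN⟩ := hfin v hv
    exact (ih _ (hn ▸ invNum_mul_swap_lt hN hab hba) _ rfl hP).of_mul_swap hN hab hba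

lemma eq_one_of_strictMonoOn_compl {u : Perm ℕ} {S : Set ℕ} (hS : ∀ x ∈ S, u x = x)
    (hmono : StrictMonoOn u Sᶜ) : u = 1 := by
  by_contra hne
  have hex : ∃ x, u x ≠ x := not_forall.1 fun h => hne (Equiv.ext h)
  classical
  -- the least point moved by `u` can be neither sent down nor hit from above
  set x := Nat.find hex
  have hx : u x ≠ x := Nat.find_spec hex
  have hfix : ∀ y < x, u y = y := fun y hy => not_not.1 (Nat.find_min hex hy)
  have hxS : x ∉ S := fun h => hx (hS x h)
  rcases hx.lt_or_gt with hlt | hgt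
  · exact hx (u.injective (hfix _ hlt))
  · obtain ⟨y, huy⟩ := u.surjective x
    have hxy : x < y := by
      rcases lt_trichotomy y x with h | rfl | h
      · have := hfix y h
        omega
      · exact absurd huy hx
      · exact h
    have hyS : y ∉ S := fun h => by
      have := hS y h
      omega
    have := hmono hxS hyS hxy
    omega

lemma eq_swap_of_strictMonoOn_compl {v : Perm ℕ} {i r : ℕ} (hi : v i = r) (hr : v r = i)
    (hmono : StrictMonoOn v {i, r}ᶜ) : v = swap i r := by
  suffices hu : v * swap i r = 1 by
    rw [← swap_inv]
    exact mul_eq_one_iff_eq_inv.1 hu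
  refine eq_one_of_strictMonoOn_compl (S := {i, r}) ?_ ?_
  · rintro x (rfl | rfl)
    · rw [Perm.mul_apply, swap_apply_left, hr]
    · rw [Perm.mul_apply, swap_apply_right, hi]
  · intro x hx y hy hxy
    have hx' : x ≠ i ∧ x ≠ r := by simpa [not_or] using hx
    have hy' : y ≠ i ∧ y ≠ r := by simpa [not_or] using hy
    rw [Perm.mul_apply, Perm.mul_apply, swap_apply_of_ne_of_ne hx'.1 hx'.2,
      swap_apply_of_ne_of_ne hy'.1 hy'.2]
    exact hmono hx hy hxy

lemma swap_apply_mem_iff {α : Type*} [DecidableEq α] {s : Set α} {a b x : α}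
    (h : a ∈ s ↔ b ∈ s) : swap a b x ∈ s ↔ x ∈ s := by
  rw [swap_apply_def]
  split_ifs with hxa hxb
  · rw [hxa, h]
  · rw [hxb, h]
  · rfl

lemma apply_mem_iff_of_image_eq {α : Type*} {f : α → α} {s : Set α} (hf : f.Injective)
    (h : f '' s = s) (x : α) : f x ∈ s ↔ x ∈ s := by
  have := hf.mem_set_image (s := s) (a := x)
  rwa [h] at this

/-- The criterion `T_{i,r} ≤ v` of the introduction, for `v` stabilising `{0, …, i - 1}`:
the maxima of `v` and `v⁻¹` over `{0, …, i}` are then `v i` and `v⁻¹ i`. -/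
def TranspositionCriterion (i r : ℕ) (v : Perm ℕ) : Prop :=
  (∀ m, v m < i ↔ m < i) ∧ r ≤ v i ∧ r ≤ v⁻¹ i

namespace TranspositionCriterion

variable {i r : ℕ} {v : Perm ℕ}

lemma mul_swap {a b : ℕ} (h : TranspositionCriterion i r v) (hab : a < i ↔ b < i)
    (hi : r ≤ v (swap a b i)) (hq : r ≤ swap a b (v⁻¹ i)) :
    TranspositionCriterion i r (v * swap a b) :=
  ⟨fun m => (h.1 _).trans (swap_apply_mem_iff (s := Set.Iio i) hab), hi,
    by rwa [mul_inv_rev, swap_inv, Perm.mul_apply]⟩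

/-- Such an inversion cannot straddle `i`, because `v` maps `{i, i + 1, …}` into itself. -/
lemma mul_swap_of_ne {a b : ℕ} (h : TranspositionCriterion i r v) (hab : a < b)
    (hba : v b < v a) (hai : a ≠ i) (hbi : b ≠ i) (haq : a ≠ v⁻¹ i) (hbq : b ≠ v⁻¹ i) :
    TranspositionCriterion i r (v * swap a b) := by
  have hside : a < i ↔ b < i := by
    have := h.1 a
    have := h.1 b
    omega
  refine h.mul_swap hside ?_ ?_
  · rw [swap_apply_of_ne_of_ne hai.symm hbi.symm]
    exact h.2.1
  · rw [swap_apply_of_ne_of_ne haq.symm hbq.symm]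
    exact h.2.2

lemma exists_inversion (hir : i < r) (h : TranspositionCriterion i r v)
    (hne : v ≠ swap i r) :
    ∃ a b, a < b ∧ v b < v a ∧ TranspositionCriterion i r (v * swap a b) := by
  have ⟨hpre, hvi, hq⟩ := h
  set q := v⁻¹ i
  have hvq : v q = i := v.apply_symm_apply i
  by_cases havoid : ∃ a b, a < b ∧ v b < v a ∧ a ≠ i ∧ b ≠ i ∧ a ≠ q ∧ b ≠ q
  · obtain ⟨a, b, hab, hba, hai, hbi, haq, hbq⟩ := havoid
    exact ⟨a, b, hab, hba, h.mul_swap_of_ne hab hba hai hbi haq hbq⟩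
  rcases hq.lt_or_eq with hrq | hrq
  · have hvr : i < v r := by
      have := hpre r
      have : v r ≠ i := fun h' => hrq.ne (v.injective (h'.trans hvq.symm))
      omega
    refine ⟨r, q, hrq, by omega, h.mul_swap (by omega) ?_ ?_⟩
    · rwa [swap_apply_of_ne_of_ne hir.ne (hir.trans hrq).ne]
    · rw [swap_apply_right]
  rcases hvi.lt_or_eq with hri | hri
  · set p := v⁻¹ r
    have hvp : v p = r := v.apply_symm_apply r
    have hip : i < p := by
      have := hpre p
      have : p ≠ i := by rintro rfl; omega
      omega
    have hqp : q ≠ p := by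
      intro h'
      rw [← h', hvq] at hvp
      omega
    refine ⟨i, p, hip, by omega, h.mul_swap (by omega) ?_ ?_⟩
    · rw [swap_apply_left, hvp]
    · rwa [swap_apply_of_ne_of_ne (by omega) hqp]
  rw [← hrq] at havoid hvq
  refine absurd (eq_swap_of_strictMonoOn_compl hri.symm hvq fun x hx y hy hxy => ?_) hne
  simp only [Set.mem_compl_iff, Set.mem_insert_iff, Set.mem_singleton_iff, not_or] at hx hy
  refine (lt_or_gt_of_ne fun h' => hxy.ne (v.injective h')).resolve_right fun hyx => ?_
  exact havoid ⟨x, y, hxy, hyx, hx.1, hy.1, hx.2, hy.2⟩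

end TranspositionCriterion

theorem stmt14_general (n : ℕ) (w : Perm ℕ) (hw : ∀ k, n ≤ k → w k = k)
    (i j : ℕ)
    (hfix : (fun m => w m) '' {m | m < i} = {m | m < i})
    (hwi : j ≤ w i) (hwj : w j = i) :
    ∀ r, i < r → r ≤ j → BruhatLE (Equiv.swap i r) w := by
  intro r hir hrj
  have hw' : TranspositionCriterion i r w :=
    ⟨apply_mem_iff_of_image_eq w.injective hfix, hrj.trans hwi,
      by rwa [Perm.inv_eq_iff_eq.2 hwj.symm]⟩
  refine bruhatLE_of_forall_ne_exists_inversion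
    (P := fun v => (∃ N, ∀ k, N ≤ k → v k = k) ∧ TranspositionCriterion i r v)
    (fun v hv => hv.1) ?_ w ⟨⟨n, hw⟩, hw'⟩
  rintro v ⟨⟨N, hN⟩, hv⟩ hne
  obtain ⟨a, b, hab, hba, hv'⟩ := hv.exists_inversion hir hne
  exact ⟨a, b, hab, hba, exists_fixed_ge_mul_swap hN a b, hv'⟩

/-- With wedge data (i,j) for w, each transposition T_{i,r} with i < r ≤ j
lies below w in Bruhat order. -/
theorem stmt14 (n : ℕ) (w : Perm ℕ) (hw : ∀ k, n ≤ k → w k = k)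
    (i j : ℕ) (hij : i < j) (hjn : j < n)
    (hfix : (fun m => w m) '' {m | m < i} = {m | m < i})
    (hwi : j ≤ w i) (hwj : w j = i) :
    ∀ r, i < r → r ≤ j → BruhatLE (Equiv.swap i r) w :=
  stmt14_general n w hw i j hfix hwi hwj
end

section
/- In the root system of type D_n (positive roots e_j − e_i and e_j + e_i for i < j), if α, β are positive roots with α + β also a positive root, then f(α) ≠ f(β), where f(e_j − e_i) = e_j − e_{j−1}, f(e_2 + e_1) = e_2 + e_1, and f(e_j + e_i) = e_j − e_{j−1} for (j,i) ≠ (2,1). -/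
/-- The positive root e_j + e_i (s = true) or e_j − e_i (s = false) of type D_n,
as a vector in ℝ^n (0-based indices, i < j). -/
def Droot (n : ℕ) (i j : Fin n) (s : Bool) : Fin n → ℝ :=
  if s then Pi.single j 1 + Pi.single i 1 else Pi.single j 1 - Pi.single i 1

/-- Membership in the set of positive roots of type D_n. -/
def DposRoot (n : ℕ) (v : Fin n → ℝ) : Prop :=
  ∃ i j : Fin n, i < j ∧ (v = Droot n i j true ∨ v = Droot n i j false)

/-- The function f : R⁺ → Π on the positive root with data (i, j, s):
f(e_2 + e_1) = e_2 + e_1 (0-based: (j,i) = (1,0)), and f = e_j − e_{j−1}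
otherwise. -/
def fD (n : ℕ) (i j : Fin n) (s : Bool) (hj : 0 < j.val) : Fin n → ℝ :=
  if s = true ∧ j.val = 1 ∧ i.val = 0 then Droot n i j true
  else Droot n ⟨j.val - 1, lt_trans (by omega) j.isLt⟩ j false

lemma Droot_apply_true (n : ℕ) (i j k : Fin n) :
    Droot n i j true k = (if k = j then (1:ℝ) else 0) + (if k = i then (1:ℝ) else 0) := by
  simp [Droot, Pi.single_apply]

lemma Droot_apply_false (n : ℕ) (i j k : Fin n) :
    Droot n i j false k = (if k = j then (1:ℝ) else 0) - (if k = i then (1:ℝ) else 0) := by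
  simp [Droot, Pi.single_apply]

lemma Droot_ne_two (n : ℕ) (i j : Fin n) (hij : i ≠ j) (s : Bool) (k : Fin n) :
    Droot n i j s k ≠ 2 := by
  cases s
  · rw [Droot_apply_false]; split_ifs <;> norm_num
  · rw [Droot_apply_true]; split_ifs with ha hb
    · exact absurd (hb.symm.trans ha) hij
    all_goals norm_num

lemma Droot_self (n : ℕ) (i j : Fin n) (hij : i ≠ j) (s : Bool) :
    Droot n i j s j = 1 := by
  cases s
  · rw [Droot_apply_false, if_pos rfl, if_neg (fun h => hij (h.symm))]; norm_num
  · rw [Droot_apply_true, if_pos rfl, if_neg (fun h => hij (h.symm))]; norm_num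

lemma sum_same_j (n : ℕ) (i₁ j i₂ : Fin n) (s₁ s₂ : Bool)
    (h₁ : i₁ < j) (h₂ : i₂ < j)
    (hsum : DposRoot n (Droot n i₁ j s₁ + Droot n i₂ j s₂)) : False := by
  obtain ⟨a, b, hab, hD⟩ := hsum
  have h1 : (Droot n i₁ j s₁ + Droot n i₂ j s₂) j = 2 := by
    rw [Pi.add_apply, Droot_self n i₁ j h₁.ne s₁, Droot_self n i₂ j h₂.ne s₂]
    norm_num
  rcases hD with hD | hD <;> rw [hD] at h1 <;>
    exact Droot_ne_two n a b hab.ne _ _ h1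

/-- In type D_n, if α, β are positive roots with α + β a positive root, then
f(α) ≠ f(β). -/
theorem stmt15 (n : ℕ) (i₁ j₁ i₂ j₂ : Fin n) (s₁ s₂ : Bool)
    (h₁ : i₁ < j₁) (h₂ : i₂ < j₂)
    (hsum : DposRoot n (Droot n i₁ j₁ s₁ + Droot n i₂ j₂ s₂)) :
    fD n i₁ j₁ s₁ (Nat.lt_of_le_of_lt (Nat.zero_le _) h₁) ≠
      fD n i₂ j₂ s₂ (Nat.lt_of_le_of_lt (Nat.zero_le _) h₂) := by
  intro heq
  have hj₁ : 0 < j₁.val := Nat.lt_of_le_of_lt (Nat.zero_le _) h₁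
  have hj₂ : 0 < j₂.val := Nat.lt_of_le_of_lt (Nat.zero_le _) h₂
  unfold fD at heq
  split_ifs at heq with hc1 hc2 hc2
  · obtain ⟨hs₁, hja, hia⟩ := hc1
    obtain ⟨hs₂, hjb, hib⟩ := hc2
    have : j₁ = j₂ := Fin.ext (by omega)
    subst this
    exact sum_same_j n i₁ j₁ i₂ s₁ s₂ h₁ h₂ hsum
  · obtain ⟨hs₁, hja, hia⟩ := hc1
    have key := congrFun heq i₁
    rw [Droot_apply_true, Droot_apply_false] at key
    have e1 : i₁ ≠ j₁ := h₁.ne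
    have e2 : i₁ ≠ j₂ := by rw [Ne, Fin.ext_iff]; omega
    rw [if_neg e1, if_pos rfl, if_neg e2] at key
    split_ifs at key <;> norm_num at key
  · obtain ⟨hs₂, hjb, hib⟩ := hc2
    have key := congrFun heq i₂
    rw [Droot_apply_false, Droot_apply_true] at key
    have e1 : i₂ ≠ j₂ := h₂.ne
    have e2 : i₂ ≠ j₁ := by rw [Ne, Fin.ext_iff]; omega
    rw [if_neg e1, if_pos rfl, if_neg e2] at key
    split_ifs at key <;> norm_num at key
  · have key := congrFun heq j₁
    rw [Droot_apply_false, Droot_apply_false] at key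
    have e1 : j₁ ≠ (⟨j₁.val - 1, lt_trans (by omega) j₁.isLt⟩ : Fin n) := by
      rw [Ne, Fin.ext_iff]; simp; omega
    rw [if_pos rfl, if_neg e1] at key
    have hjj : j₁ = j₂ := by
      by_contra hne
      rw [if_neg hne] at key
      split_ifs at key <;> norm_num at key
    subst hjj
    exact sum_same_j n i₁ j₁ i₂ s₁ s₂ h₁ h₂ hsum
end
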